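/- arXiv:2206.02700 — 2 statements merged into one kernel-verified Lean document; each statement's English description precedes it below -/
import Mathlib

section
/- The convex n-gon has no flip cut edge: for every chord e, the flip graph F_{-{e}} of triangulations avoiding e is connected. -/
namespace FlipCut

/-- `x` lies strictly inside the open cyclic arc from `a` to `b`
(going forward in the cyclic order on `ZMod n`). -/
def Btw (n : ℕ) (a x b : ZMod n) : Prop :=
  0 < (x - a).val ∧ (x - a).val < (b - a).val

/-- An unordered pair of vertices of the convex `n`-gon is a *chord*:
its two endpoints are distinct and not cyclically adjacent. -/
def IsChord (n : ℕ) (e : Sym2 (ZMod n)) : Prop :=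
  ¬ e.IsDiag ∧ ∀ a ∈ e, ∀ b ∈ e, a ≠ b → b ≠ a + 1 ∧ b ≠ a - 1

/-- Two chords *cross*: they can be written as `{a, b}` and `{c, d}` where `c`
lies strictly inside the open cyclic arc from `a` to `b` and `d` lies strictly
inside the open cyclic arc from `b` to `a` (i.e. the endpoint pairs separate
each other in the cyclic order, equivalently exactly one of `c, d` lies in the
open cyclic arc from `a` to `b`). -/
def Crosses (n : ℕ) (e f : Sym2 (ZMod n)) : Prop :=
  ∃ a b c d : ZMod n, e = s(a, b) ∧ f = s(c, d) ∧ Btw n a c b ∧ Btw n b d a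

/-- A *triangulation* of the convex `n`-gon: a set of exactly `n - 3`
pairwise non-crossing chords. -/
def IsTriangulation (n : ℕ) (T : Finset (Sym2 (ZMod n))) : Prop :=
  T.card = n - 3 ∧ (∀ e ∈ T, IsChord n e) ∧
    ∀ e ∈ T, ∀ f ∈ T, e ≠ f → ¬ Crosses n e f

/-- Triangulations `T` and `T'` differ by a *flip*: their symmetric difference
has exactly two chords. -/
def FlipAdj (n : ℕ) (T T' : Finset (Sym2 (ZMod n))) : Prop :=
  (symmDiff T T').card = 2

/-- `T` *avoids* `X`: `T` contains no chord of `X`. -/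
def Avoids (n : ℕ) (T X : Finset (Sym2 (ZMod n))) : Prop :=
  ∀ e ∈ X, e ∉ T

/-- A vertex of the flip graph `F₋ₓ`: a triangulation avoiding `X`. -/
def AvoidingTri (n : ℕ) (X T : Finset (Sym2 (ZMod n))) : Prop :=
  IsTriangulation n T ∧ Avoids n T X

/-- A single edge of the flip graph `F₋ₓ`: both endpoints are triangulations
avoiding `X` and they differ by a flip. -/
def FlipStep (n : ℕ) (X T T' : Finset (Sym2 (ZMod n))) : Prop :=
  AvoidingTri n X T ∧ AvoidingTri n X T' ∧ FlipAdj n T T'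

/-- `S` and `T` are joined by a path in the flip graph `F₋ₓ`: a sequence of
flips in which every intermediate triangulation avoids `X`. -/
def FlipConn (n : ℕ) (X S T : Finset (Sym2 (ZMod n))) : Prop :=
  Relation.ReflTransGen (FlipStep n X) S T

/-- The flip graph `F₋ₓ` is connected. -/
def FlipGraphConnected (n : ℕ) (X : Finset (Sym2 (ZMod n))) : Prop :=
  ∀ S T, AvoidingTri n X S → AvoidingTri n X T → FlipConn n X S T

/-- `X` is a *flip cut set*: a set of chords such that the flip graph `F₋ₓ`
is disconnected. -/
def IsFlipCutSet (n : ℕ) (X : Finset (Sym2 (ZMod n))) : Prop :=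
  (∀ e ∈ X, IsChord n e) ∧ ¬ FlipGraphConnected n X

/-!
Fix a vertex `p` lying on no chord to be avoided and read the vertices as positions `0, …, n - 1`
counted from `p`: chords become arcs `(i, j)` with `i + 2 ≤ j`, and crossing becomes interlacing.
If a triangulation has a chord missing `p`, flip its longest such chord `(q, q')` to the chord
from `p` to the apex of the triangle under `(q, q')`. Such a flip trades a chord missing `p` for
one through `p`, so it never creates a forbidden chord. Iterating ends at a triangulation whose
`n - 3` chords all pass through `p`, and there is only one: the fan at `p`.
-/

def Interlaced (c d : ℕ × ℕ) : Prop :=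
  c.1 < d.1 ∧ d.1 < c.2 ∧ c.2 < d.2 ∨ d.1 < c.1 ∧ c.1 < d.2 ∧ d.2 < c.2

lemma exists_flip_to_zero {S : Finset (ℕ × ℕ)} (hS : ∀ c ∈ S, ∀ d ∈ S, ¬ Interlaced c d)
    {f : ℕ × ℕ} (hf : f ∈ S) (hf₁ : 0 < f.1) (hf₂ : f.1 + 2 ≤ f.2)
    (hmax : ∀ d ∈ S, 0 < d.1 → d.2 - d.1 ≤ f.2 - f.1) :
    ∃ s, f.1 < s ∧ s < f.2 ∧ ∀ d ∈ S, d ≠ f → ¬ Interlaced (0, s) d := by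
  obtain ⟨q, q'⟩ := f
  dsimp only at hf₁ hf₂ hmax ⊢
  -- `s` is the farthest neighbour of `q` below `q'`: the apex of the triangle under `(q, q')`.
  obtain ⟨s, hs, hs_max⟩ :=
    ((Finset.Ioo q q').filter (fun k => k = q + 1 ∨ (q, k) ∈ S)).exists_max_image id
      ⟨q + 1, Finset.mem_filter.2 ⟨Finset.mem_Ioo.2 ⟨by omega, by omega⟩, Or.inl rfl⟩⟩
  simp only [Finset.mem_filter, Finset.mem_Ioo, id] at hs hs_max
  refine ⟨s, hs.1.1, hs.1.2, ?_⟩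
  rintro ⟨x, y⟩ hd hne hxy
  simp only [Interlaced, ne_eq, Prod.mk.injEq] at hxy hne
  have h₁ := hS _ hf _ hd
  have h₂ : 0 < x → y - x ≤ q' - q := hmax _ hd
  have h₃ : x = q → y < q' → y ≤ s := by
    rintro rfl hy
    exact hs_max y ⟨⟨by omega, hy⟩, Or.inr hd⟩
  have h₄ : s = q + 1 ∨ ¬ Interlaced (q, s) (x, y) := hs.2.imp_right (hS _ · _ hd)
  simp only [Interlaced] at h₁ h₄
  omega

section Coordinates

variable {n : ℕ}

def pos (p x : ZMod n) : ℕ := (x - p).val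

lemma pos_lt [NeZero n] (p x : ZMod n) : pos p x < n := ZMod.val_lt _

lemma pos_eq_zero {p x : ZMod n} : pos p x = 0 ↔ x = p := by
  rw [pos, ZMod.val_eq_zero, sub_eq_zero]

lemma pos_injective [NeZero n] (p : ZMod n) : Function.Injective (pos p) :=
  fun _ _ h => sub_left_inj.1 (ZMod.val_injective n h)

lemma pos_add_natCast (p : ZMod n) {k : ℕ} (hk : k < n) : pos p (p + k) = k := by
  rw [pos, add_sub_cancel_left, ZMod.val_cast_of_lt hk]

lemma val_sub_eq [NeZero n] (p a x : ZMod n) :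
    (x - a).val = if pos p a ≤ pos p x then pos p x - pos p a else pos p x + n - pos p a := by
  have ha := pos_lt p a
  rw [show x - a = (x - p) - (a - p) by ring]
  split_ifs with h
  · exact ZMod.val_sub h
  · have ha0 : a - p ≠ 0 := fun h0 => h (by simp [pos, h0])
    rw [sub_eq_add_neg, ZMod.val_add, ZMod.neg_val, if_neg ha0]
    unfold pos at *
    rw [Nat.mod_eq_of_lt (by omega)]
    omega

lemma pos_add_one [NeZero n] (p a : ZMod n) :
    pos p (a + 1) = if pos p a + 1 = n then 0 else pos p a + 1 := by
  have ha := pos_lt p a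
  rw [pos, add_sub_right_comm, ZMod.val_add, ZMod.val_one_eq_one_mod, Nat.add_mod_mod]
  split_ifs with h
  · rw [← pos, h, Nat.mod_self]
  · exact Nat.mod_eq_of_lt (by unfold pos at *; omega)

lemma btw_iff_pos [NeZero n] (p a x b : ZMod n) :
    Btw n a x b ↔ pos p a < pos p x ∧ pos p x < pos p b ∨ pos p b < pos p a ∧ pos p a < pos p x ∨
      pos p x < pos p b ∧ pos p b < pos p a := by
  have := pos_lt p a
  have := pos_lt p x
  have := pos_lt p b
  rw [Btw, val_sub_eq p a x, val_sub_eq p a b]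
  split_ifs <;> omega

def arc (p : ZMod n) : Sym2 (ZMod n) → ℕ × ℕ :=
  Sym2.lift ⟨fun a b => (min (pos p a) (pos p b), max (pos p a) (pos p b)),
    fun _ _ => Prod.ext (min_comm _ _) (max_comm _ _)⟩

lemma arc_mk (p a b : ZMod n) :
    arc p s(a, b) = (min (pos p a) (pos p b), max (pos p a) (pos p b)) := rfl

lemma arc_snd_lt [NeZero n] (p : ZMod n) (e : Sym2 (ZMod n)) : (arc p e).2 < n := by
  induction e using Sym2.ind with
  | _ a b => exact max_lt (pos_lt p a) (pos_lt p b)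

lemma arc_injective [NeZero n] (p : ZMod n) : Function.Injective (arc p) := by
  intro e f h
  induction e using Sym2.ind with | _ a b =>
  induction f using Sym2.ind with | _ c d =>
  simp only [arc_mk, Prod.mk.injEq] at h
  have := pos_injective p
  rcases (by omega : pos p a = pos p c ∧ pos p b = pos p d ∨ pos p a = pos p d ∧ pos p b = pos p c)
    with ⟨h₁, h₂⟩ | ⟨h₁, h₂⟩
  · rw [pos_injective p h₁, pos_injective p h₂]
  · rw [pos_injective p h₁, pos_injective p h₂, Sym2.eq_swap]

lemma arc_fst_eq_zero_iff {p : ZMod n} {e : Sym2 (ZMod n)} : (arc p e).1 = 0 ↔ p ∈ e := by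
  induction e using Sym2.ind with
  | _ a b =>
    simp only [Sym2.mem_iff, arc_mk, Nat.min_eq_zero_iff, pos_eq_zero]
    tauto

lemma arc_spoke (p : ZMod n) {k : ℕ} (hk : k < n) : arc p s(p, p + k) = (0, k) := by
  rw [arc_mk, pos_add_natCast p hk, pos_eq_zero.2 rfl, Nat.zero_min, Nat.zero_max]

lemma isChord_iff_arc [NeZero n] (p : ZMod n) (e : Sym2 (ZMod n)) :
    IsChord n e ↔ (arc p e).1 + 2 ≤ (arc p e).2 ∧ ¬ ((arc p e).1 = 0 ∧ (arc p e).2 = n - 1) := by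
  induction e using Sym2.ind with | _ a b =>
  have hchord : IsChord n s(a, b) ↔ a ≠ b ∧ b ≠ a + 1 ∧ a ≠ b + 1 := by
    simp only [IsChord, Sym2.mk_isDiag_iff, Sym2.mem_iff]
    grind
  have := pos_lt p a
  have := pos_lt p b
  rw [hchord, ← (pos_injective p).ne_iff, ← (pos_injective p).ne_iff,
    ← (pos_injective p).ne_iff, pos_add_one, pos_add_one, arc_mk]
  split_ifs <;> omega

lemma crosses_iff_interlaced [NeZero n] (p : ZMod n) {e f : Sym2 (ZMod n)} :
    Crosses n e f ↔ Interlaced (arc p e) (arc p f) := by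
  induction e using Sym2.ind with | _ a b =>
  induction f using Sym2.ind with | _ c d =>
  simp only [arc_mk, Interlaced]
  constructor
  · rintro ⟨a', b', c', d', he, hf, h₁, h₂⟩
    rw [btw_iff_pos p] at h₁ h₂
    rcases Sym2.eq_iff.1 he with ⟨rfl, rfl⟩ | ⟨rfl, rfl⟩ <;>
      rcases Sym2.eq_iff.1 hf with ⟨rfl, rfl⟩ | ⟨rfl, rfl⟩ <;> omega
  · intro h
    simp only [Crosses, btw_iff_pos p]
    by_cases hcd : (pos p a < pos p c ∧ pos p c < pos p b ∨ pos p b < pos p a ∧ pos p a < pos p c ∨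
      pos p c < pos p b ∧ pos p b < pos p a)
    · exact ⟨a, b, c, d, rfl, rfl, hcd, by omega⟩
    · exact ⟨a, b, d, c, rfl, Sym2.eq_swap, by omega, by omega⟩

lemma crosses_comm [NeZero n] {e f : Sym2 (ZMod n)} : Crosses n e f ↔ Crosses n f e := by
  simp only [crosses_iff_interlaced 0, Interlaced, or_comm]

end Coordinates

section Flips

variable {n : ℕ} {T : Finset (Sym2 (ZMod n))}

lemma IsTriangulation.insert_erase [NeZero n] (hT : IsTriangulation n T) {f g : Sym2 (ZMod n)}
    (hf : f ∈ T) (hg : IsChord n g) (hgT : g ∉ T) (hcross : ∀ d ∈ T, d ≠ f → ¬ Crosses n g d) :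
    IsTriangulation n (insert g (T.erase f)) := by
  obtain ⟨hcard, hchord, hnc⟩ := hT
  have hpos : 0 < T.card := Finset.card_pos.2 ⟨f, hf⟩
  refine ⟨?_, ?_, ?_⟩
  · rw [Finset.card_insert_of_notMem (fun h => hgT (Finset.mem_of_mem_erase h)),
      Finset.card_erase_of_mem hf]
    omega
  · simp only [Finset.mem_insert, Finset.mem_erase]
    rintro c (rfl | ⟨-, hc⟩)
    exacts [hg, hchord c hc]
  · simp only [Finset.mem_insert, Finset.mem_erase]
    rintro c (rfl | ⟨hcf, hc⟩) d (rfl | ⟨hdf, hd⟩) hcd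
    · exact absurd rfl hcd
    · exact hcross d hd hdf
    · exact fun h => hcross c hc hcf (crosses_comm.1 h)
    · exact hnc c hc d hd hcd

lemma flipAdj_insert_erase {f g : Sym2 (ZMod n)} (hf : f ∈ T) (hgT : g ∉ T) :
    FlipAdj n T (insert g (T.erase f)) := by
  have hsymm : symmDiff T (insert g (T.erase f)) = {f, g} := by
    ext c
    simp only [Finset.mem_symmDiff, Finset.mem_insert, Finset.mem_erase, Finset.mem_singleton]
    grind
  rw [FlipAdj, hsymm, Finset.card_pair (ne_of_mem_of_not_mem hf hgT)]

lemma IsTriangulation.exists_flip [NeZero n] (hT : IsTriangulation n T) {p : ZMod n}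
    (h : ∃ c ∈ T, p ∉ c) :
    ∃ f ∈ T, p ∉ f ∧ ∃ g, p ∈ g ∧ IsChord n g ∧ g ∉ T ∧ ∀ d ∈ T, d ≠ f → ¬ Crosses n g d := by
  obtain ⟨f, hf, hf_max⟩ := (T.filter (p ∉ ·)).exists_max_image
    (fun c => (arc p c).2 - (arc p c).1) (by simpa [Finset.filter_nonempty_iff] using h)
  rw [Finset.mem_filter] at hf
  have hf₁ : 0 < (arc p f).1 := Nat.pos_of_ne_zero (mt arc_fst_eq_zero_iff.1 hf.2)
  have hf₂ := ((isChord_iff_arc p f).1 (hT.2.1 f hf.1)).1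
  have hnc : ∀ c ∈ T.image (arc p), ∀ d ∈ T.image (arc p), ¬ Interlaced c d := by
    simp only [Finset.mem_image]
    rintro _ ⟨c, hc, rfl⟩ _ ⟨d, hd, rfl⟩
    rcases eq_or_ne c d with rfl | hcd
    · simp only [Interlaced]
      omega
    · exact (crosses_iff_interlaced p).not.1 (hT.2.2 c hc d hd hcd)
  obtain ⟨s, hs₁, hs₂, hs⟩ := exists_flip_to_zero hnc (Finset.mem_image_of_mem _ hf.1) hf₁ hf₂
    (by
      simp only [Finset.mem_image]
      rintro _ ⟨d, hd, rfl⟩ hd₁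
      exact hf_max d (Finset.mem_filter.2 ⟨hd, mt arc_fst_eq_zero_iff.2 hd₁.ne'⟩))
  have hsn : s < n := hs₂.trans (arc_snd_lt p f)
  have hg := arc_spoke p hsn
  have hcross : ∀ d ∈ T, d ≠ f → ¬ Crosses n s(p, p + s) d := fun d hd hdf => by
    rw [crosses_iff_interlaced p, hg]
    exact hs _ (Finset.mem_image_of_mem _ hd) ((arc_injective p).ne hdf)
  have hgf : Crosses n s(p, p + s) f := by
    rw [crosses_iff_interlaced p, hg, Interlaced]
    omega
  refine ⟨f, hf.1, hf.2, s(p, p + s), Sym2.mem_mk_left _ _, ?_, fun hgT => ?_, hcross⟩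
  · rw [isChord_iff_arc p, hg]
    have := arc_snd_lt p f
    omega
  · exact hT.2.2 _ hgT f hf.1 (fun h => hf.2 (h ▸ Sym2.mem_mk_left _ _)) hgf

lemma image_arc_eq_of_forall_mem [NeZero n] (hT : IsTriangulation n T) {p : ZMod n}
    (hp : ∀ c ∈ T, p ∈ c) :
    T.image (arc p) = (Finset.Icc 2 (n - 2)).image (fun k => (0, k)) := by
  refine Finset.eq_of_subset_of_card_le ?_ ?_
  · simp only [Finset.subset_iff, Finset.mem_image, Finset.mem_Icc]
    rintro _ ⟨c, hc, rfl⟩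
    have h₀ := arc_fst_eq_zero_iff.2 (hp c hc)
    have h₁ := (isChord_iff_arc p c).1 (hT.2.1 c hc)
    have h₂ := arc_snd_lt p c
    exact ⟨(arc p c).2, by omega, Prod.ext h₀.symm rfl⟩
  · rw [Finset.card_image_of_injective _ (arc_injective p), hT.1,
      Finset.card_image_of_injective _ (Prod.mk_right_injective 0), Nat.card_Icc]
    omega

end Flips

section FlipGraph

variable {n : ℕ} [NeZero n] {X : Finset (Sym2 (ZMod n))} {p : ZMod n}

instance : Std.Symm (FlipStep n X) where
  symm _ _ h := ⟨h.2.1, h.1, by rw [FlipAdj, symmDiff_comm]; exact h.2.2⟩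

lemma exists_flipConn_fan (hX : ∀ e ∈ X, p ∉ e) {T : Finset (Sym2 (ZMod n))}
    (hT : AvoidingTri n X T) : ∃ U, FlipConn n X T U ∧ IsTriangulation n U ∧ ∀ c ∈ U, p ∈ c := by
  induction hk : (T.filter (p ∉ ·)).card using Nat.strong_induction_on generalizing T with
  | _ k ih =>
  by_cases hfan : ∀ c ∈ T, p ∈ c
  · exact ⟨T, .refl, hT.1, hfan⟩
  push Not at hfan
  obtain ⟨f, hf, hpf, g, hpg, hg, hgT, hcross⟩ := hT.1.exists_flip hfan
  have hT' : AvoidingTri n X (insert g (T.erase f)) := by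
    refine ⟨hT.1.insert_erase hf hg hgT hcross, fun e he hmem => ?_⟩
    rcases Finset.mem_insert.1 hmem with rfl | hmem
    · exact hX e he hpg
    · exact hT.2 e he (Finset.mem_of_mem_erase hmem)
  have hfilter : (insert g (T.erase f)).filter (p ∉ ·) = (T.filter (p ∉ ·)).erase f := by
    rw [Finset.filter_insert, if_neg (not_not.2 hpg), Finset.filter_erase]
  obtain ⟨U, hU, hUtri, hUp⟩ := ih _ (hk ▸ hfilter ▸ Finset.card_erase_lt_of_mem
    (Finset.mem_filter.2 ⟨hf, hpf⟩)) hT' rfl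
  exact ⟨U, .head ⟨hT, hT', flipAdj_insert_erase hf hgT⟩ hU, hUtri, hUp⟩

theorem flipGraphConnected_of_forall_notMem (hX : ∀ e ∈ X, p ∉ e) : FlipGraphConnected n X := by
  intro S T hS hT
  obtain ⟨U, hSU, hU, hUp⟩ := exists_flipConn_fan hX hS
  obtain ⟨V, hTV, hV, hVp⟩ := exists_flipConn_fan hX hT
  have hUV : U = V := Finset.image_injective (arc_injective p)
    ((image_arc_eq_of_forall_mem hU hUp).trans (image_arc_eq_of_forall_mem hV hVp).symm)
  exact hSU.trans (hUV ▸ Std.Symm.symm _ _ hTV)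

end FlipGraph

theorem no_flip_cut_edge_convex_general (n : ℕ) (hn : 3 ≤ n)
    (e : Sym2 (ZMod n)) :
    FlipGraphConnected n {e} := by
  have : NeZero n := ⟨by omega⟩
  obtain ⟨a, b⟩ := e
  obtain ⟨p, -, hp⟩ := Finset.exists_mem_notMem_of_card_lt_card (s := {a, b})
    (t := Finset.univ) (by rw [Finset.card_univ, ZMod.card]; exact Finset.card_le_two.trans_lt hn)
  refine flipGraphConnected_of_forall_notMem (p := p) fun e he => ?_
  rw [Finset.mem_singleton.1 he]
  simpa [Sym2.mem_iff, eq_comm] using hp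

/-- The convex `n`-gon has no flip cut edge: for every chord
`e`, the flip graph `F₋₍ₑ₎` of triangulations avoiding `e` is connected. -/
theorem no_flip_cut_edge_convex (n : ℕ) (hn : 3 ≤ n)
    (e : Sym2 (ZMod n)) (he : IsChord n e) :
    FlipGraphConnected n {e} :=
  no_flip_cut_edge_convex_general n hn e

end FlipCut
end

section
/- For every integer n ≥ 3 and every set X of chords of the convex n-gon with |X| ≤ n - 3, there exists a triangulation of the n-gon that contains no chord of X. -/
namespace FlipCut

private def dd (m p q : ℕ) : ℕ := if p ≤ q then q - p else q + m - p

private lemma cast_val {m : ℕ} [NeZero m] (a : ZMod m) : ((a.val : ℕ) : ZMod m) = a :=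
  ZMod.natCast_rightInverse a

private lemma val_sub_eq_s4 {m : ℕ} [NeZero m] (a x : ZMod m) :
    (x - a).val = dd m a.val x.val := by
  have hm : 0 < m := Nat.pos_of_ne_zero (NeZero.ne m)
  have hx := ZMod.val_lt x
  have ha := ZMod.val_lt a
  have h1 : x - a = ((x.val + (m - a.val) : ℕ) : ZMod m) := by
    push_cast [Nat.cast_sub ha.le, cast_val, ZMod.natCast_self]
    ring
  rw [h1, ZMod.val_natCast]
  unfold dd
  split_ifs with h
  · have h2 : x.val + (m - a.val) = (x.val - a.val) + m := by omega
    rw [h2, Nat.add_mod_right]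
    have := Nat.mod_eq_of_lt (show x.val - a.val < m by omega)
    omega
  · have := Nat.mod_eq_of_lt (show x.val + (m - a.val) < m by omega)
    omega

private lemma btw_iff {m : ℕ} [NeZero m] (a x b : ZMod m) :
    Btw m a x b ↔ (0 < dd m a.val x.val ∧ dd m a.val x.val < dd m a.val b.val) := by
  unfold Btw
  rw [val_sub_eq_s4, val_sub_eq_s4]

private def embN (n : ℕ) (v : ZMod (n+1)) (k : ℕ) : ZMod (n+1) := v + 1 + (k : ZMod (n+1))
private def emb (n : ℕ) (v : ZMod (n+1)) (u : ZMod n) : ZMod (n+1) := embN n v u.val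
private def ivm (n : ℕ) (v : ZMod (n+1)) (w : ZMod (n+1)) : ZMod n := ((w - (v+1)).val : ZMod n)

private lemma natCast_n (n : ℕ) : ((n:ℕ) : ZMod (n+1)) = -1 := by
  have h := ZMod.natCast_self (n+1)
  push_cast at h
  linear_combination h

private lemma embN_sub {n : ℕ} (v : ZMod (n+1)) {k l : ℕ} (hk : k ≤ n) (hl : l ≤ n) :
    (embN n v l - embN n v k).val = dd (n+1) k l := by
  have h1 : embN n v l - embN n v k = (l : ZMod (n+1)) - (k : ZMod (n+1)) := by
    unfold embN; ring
  rw [h1, val_sub_eq_s4, ZMod.val_natCast_of_lt (by omega), ZMod.val_natCast_of_lt (by omega)]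

private lemma btw_embN {n : ℕ} (v : ZMod (n+1)) {k l m' : ℕ} (hk : k ≤ n) (hl : l ≤ n)
    (hm : m' ≤ n) :
    Btw (n+1) (embN n v k) (embN n v l) (embN n v m') ↔
      (0 < dd (n+1) k l ∧ dd (n+1) k l < dd (n+1) k m') := by
  unfold Btw
  rw [embN_sub v hk hl, embN_sub v hk hm]

private lemma embN_inj {n : ℕ} {v : ZMod (n+1)} {k l : ℕ} (hk : k ≤ n) (hl : l ≤ n)
    (h : embN n v k = embN n v l) : k = l := by
  have h2 : (k : ZMod (n+1)) = l := by
    unfold embN at h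
    exact add_left_cancel h
  have h3 := congrArg ZMod.val h2
  rwa [ZMod.val_natCast_of_lt (by omega), ZMod.val_natCast_of_lt (by omega)] at h3

private lemma embN_n_eq {n : ℕ} (v : ZMod (n+1)) : embN n v n = v := by
  unfold embN
  have := natCast_n n
  rw [this]; ring

private lemma emb_inj {n : ℕ} [NeZero n] (v : ZMod (n+1)) : Function.Injective (emb n v) := by
  intro u u' h
  have h3 : u.val = u'.val :=
    embN_inj (le_of_lt (ZMod.val_lt u)) (le_of_lt (ZMod.val_lt u')) h
  have := congrArg (fun k : ℕ => (k : ZMod n)) h3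
  simpa [cast_val] using this

private lemma emb_ne_v {n : ℕ} [NeZero n] (v : ZMod (n+1)) (u : ZMod n) : emb n v u ≠ v := by
  intro h
  have hu := ZMod.val_lt u
  have h2 : emb n v u = embN n v n := h.trans (embN_n_eq v).symm
  have := embN_inj (le_of_lt hu) (le_refl n) h2
  omega

private lemma emb_ivm {n : ℕ} [NeZero n] (v : ZMod (n+1)) {w : ZMod (n+1)} (hw : w ≠ v) :
    emb n v (ivm n v w) = w := by
  have hk : (w - (v+1)).val < n + 1 := ZMod.val_lt _
  have hkn : (w - (v+1)).val ≠ n := by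
    intro h
    have h2 : w - (v+1) = ((n:ℕ) : ZMod (n+1)) := by
      conv_lhs => rw [← cast_val (w - (v+1))]
      rw [h]
    rw [natCast_n] at h2
    apply hw
    linear_combination h2
  unfold emb ivm embN
  rw [ZMod.val_natCast_of_lt (by omega), cast_val]
  ring

private lemma ivm_emb {n : ℕ} [NeZero n] (v : ZMod (n+1)) (u : ZMod n) :
    ivm n v (emb n v u) = u := by
  unfold ivm emb embN
  have h1 : v + 1 + ((u.val : ℕ) : ZMod (n+1)) - (v+1) = ((u.val:ℕ) : ZMod (n+1)) := by ring
  rw [h1, ZMod.val_natCast_of_lt (by have := ZMod.val_lt u; omega), cast_val]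

private lemma btw_emb {n : ℕ} [NeZero n] (v : ZMod (n+1)) (a x b : ZMod n) :
    Btw n a x b ↔ Btw (n+1) (emb n v a) (emb n v x) (emb n v b) := by
  have ha := ZMod.val_lt a
  have hx := ZMod.val_lt x
  have hb := ZMod.val_lt b
  rw [btw_iff]
  unfold emb
  rw [btw_embN v (by omega) (by omega) (by omega)]
  unfold dd
  split_ifs <;> omega

private lemma v_add_one {n : ℕ} (v : ZMod (n+1)) : v + 1 = embN n v 0 := by
  unfold embN; push_cast; ring

private lemma v_sub_one {n : ℕ} (hn : 1 ≤ n) (v : ZMod (n+1)) : v - 1 = embN n v (n-1) := by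
  unfold embN
  rw [Nat.cast_sub hn, natCast_n]
  push_cast
  ring

private lemma emb_add_one {n : ℕ} [NeZero n] (v : ZMod (n+1)) {x y : ZMod n} (h : y ≠ x + 1) :
    emb n v y ≠ emb n v x + 1 := by
  intro he
  have hx := ZMod.val_lt x
  have hy := ZMod.val_lt y
  have h1 : emb n v x + 1 = embN n v (x.val + 1) := by
    unfold emb embN; push_cast; ring
  rw [h1] at he
  have h2 : y.val = x.val + 1 := embN_inj (by omega) (by omega) he
  apply h
  have h3 : x + 1 = ((x.val + 1 : ℕ) : ZMod n) := by push_cast [cast_val]; ring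
  rw [h3, ← h2, cast_val]

private lemma emb_sub_one {n : ℕ} [NeZero n] (v : ZMod (n+1)) {x y : ZMod n} (h : y ≠ x - 1) :
    emb n v y ≠ emb n v x - 1 := by
  intro he
  have hx := ZMod.val_lt x
  have hy := ZMod.val_lt y
  by_cases hx0 : x.val = 0
  · have h1 : emb n v x - 1 = v := by
      unfold emb embN
      rw [hx0]
      push_cast
      ring
    rw [h1] at he
    exact emb_ne_v v y he
  · have h1 : emb n v x - 1 = embN n v (x.val - 1) := by
      unfold emb embN
      rw [Nat.cast_sub (by omega : 1 ≤ x.val)]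
      push_cast
      ring
    rw [h1] at he
    have h2 : y.val = x.val - 1 := embN_inj (by omega) (by omega) he
    apply h
    have h3 : x - 1 = ((x.val - 1 : ℕ) : ZMod n) := by
      rw [Nat.cast_sub (by omega : 1 ≤ x.val)]
      push_cast [cast_val]
      ring
    rw [h3, ← h2, cast_val]

private lemma sym2_cases {α : Type*} (c : Sym2 α) : ∃ x y, c = s(x,y) := by
  induction c using Sym2.ind with
  | _ x y => exact ⟨x, y, rfl⟩

private lemma isChord_emb {n : ℕ} (hn : 3 ≤ n) (v : ZMod (n+1)) {x y : ZMod n}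
    (hc : IsChord n s(x,y)) : IsChord (n+1) s(emb n v x, emb n v y) := by
  haveI : NeZero n := ⟨by omega⟩
  obtain ⟨hdiag, hadj⟩ := hc
  have hxy : x ≠ y := fun h => hdiag (Sym2.mk_isDiag_iff.mpr h)
  have h1 := hadj x (Sym2.mem_mk_left _ _) y (Sym2.mem_mk_right _ _) hxy
  have h2 := hadj y (Sym2.mem_mk_right _ _) x (Sym2.mem_mk_left _ _) hxy.symm
  constructor
  · intro hd
    exact hxy (emb_inj v (Sym2.mk_isDiag_iff.mp hd))
  · intro a ha b hb hab
    rw [Sym2.mem_iff] at ha hb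
    rcases ha with rfl | rfl <;> rcases hb with rfl | rfl
    · exact absurd rfl hab
    · exact ⟨emb_add_one v h1.1, emb_sub_one v h1.2⟩
    · exact ⟨emb_add_one v h2.1, emb_sub_one v h2.2⟩
    · exact absurd rfl hab

private lemma cast_ne_zero' {n : ℕ} {k : ℕ} (h1 : 0 < k) (h2 : k < n+1) :
    ((k:ℕ) : ZMod (n+1)) ≠ 0 := by
  intro h
  have := congrArg ZMod.val h
  rw [ZMod.val_natCast_of_lt h2, ZMod.val_zero] at this
  omega

private lemma ear_isChord {n : ℕ} (hn : 3 ≤ n) (v : ZMod (n+1)) :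
    IsChord (n+1) s(v-1, v+1) := by
  have k1 : ((1:ℕ) : ZMod (n+1)) ≠ 0 := cast_ne_zero' (by norm_num) (by omega)
  have k2 : ((2:ℕ) : ZMod (n+1)) ≠ 0 := cast_ne_zero' (by norm_num) (by omega)
  have k3 : ((3:ℕ) : ZMod (n+1)) ≠ 0 := cast_ne_zero' (by norm_num) (by omega)
  push_cast at k1 k2 k3
  constructor
  · intro hd
    rw [Sym2.mk_isDiag_iff] at hd
    exact k2 (by linear_combination - hd)
  · intro a ha b hb hab
    rw [Sym2.mem_iff] at ha hb
    rcases ha with rfl | rfl <;> rcases hb with rfl | rfl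
    · exact absurd rfl hab
    · constructor
      · intro h; exact k1 (by linear_combination h)
      · intro h; exact k3 (by linear_combination h)
    · constructor
      · intro h; exact k3 (by linear_combination - h)
      · intro h; exact k1 (by linear_combination - h)
    · exact absurd rfl hab

private lemma not_btw_ear {n : ℕ} [NeZero n] (hn : 3 ≤ n) (v : ZMod (n+1)) (u : ZMod n) :
    ¬ Btw (n+1) (v-1) (emb n v u) (v+1) := by
  have hu := ZMod.val_lt u
  rw [v_sub_one (by omega) v, v_add_one]
  unfold emb
  rw [btw_embN v (by omega) (by omega) (by omega)]
  unfold dd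
  split_ifs <;> omega

private lemma no_cross_ear₁ {n : ℕ} [NeZero n] (hn : 3 ≤ n) (v : ZMod (n+1)) (x y : ZMod n) :
    ¬ Crosses (n+1) s(v-1, v+1) s(emb n v x, emb n v y) := by
  rintro ⟨a, b, c, d, h1, h2, hb1, hb2⟩
  rcases Sym2.eq_iff.mp h1 with ⟨ha, hb⟩ | ⟨ha, hb⟩ <;>
    rcases Sym2.eq_iff.mp h2 with ⟨hc, hd⟩ | ⟨hc, hd⟩
  all_goals subst ha; subst hb; subst hc; subst hd
  · exact not_btw_ear hn v x hb1
  · exact not_btw_ear hn v y hb1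
  · exact not_btw_ear hn v y hb2
  · exact not_btw_ear hn v x hb2

private lemma no_sep {n : ℕ} [NeZero n] (hn : 3 ≤ n) (v : ZMod (n+1)) (p q : ZMod n) :
    ¬ (Btw (n+1) (emb n v p) (v+1) (emb n v q) ∧ Btw (n+1) (emb n v q) (v-1) (emb n v p)) := by
  have hp := ZMod.val_lt p
  have hq := ZMod.val_lt q
  rw [v_sub_one (by omega) v, v_add_one]
  unfold emb
  rw [btw_embN v (by omega) (by omega) (by omega), btw_embN v (by omega) (by omega) (by omega)]
  unfold dd
  split_ifs <;> omega

private lemma no_sep' {n : ℕ} [NeZero n] (hn : 3 ≤ n) (v : ZMod (n+1)) (p q : ZMod n) :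
    ¬ (Btw (n+1) (emb n v p) (v-1) (emb n v q) ∧ Btw (n+1) (emb n v q) (v+1) (emb n v p)) := by
  have hp := ZMod.val_lt p
  have hq := ZMod.val_lt q
  rw [v_sub_one (by omega) v, v_add_one]
  unfold emb
  rw [btw_embN v (by omega) (by omega) (by omega), btw_embN v (by omega) (by omega) (by omega)]
  unfold dd
  split_ifs <;> omega

private lemma no_cross_ear₂ {n : ℕ} [NeZero n] (hn : 3 ≤ n) (v : ZMod (n+1)) (x y : ZMod n) :
    ¬ Crosses (n+1) s(emb n v x, emb n v y) s(v-1, v+1) := by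
  rintro ⟨a, b, c, d, h1, h2, hb1, hb2⟩
  rcases Sym2.eq_iff.mp h1 with ⟨ha, hb⟩ | ⟨ha, hb⟩ <;>
    rcases Sym2.eq_iff.mp h2 with ⟨hc, hd⟩ | ⟨hc, hd⟩
  all_goals subst ha; subst hb; subst hc; subst hd
  · exact no_sep' hn v x y ⟨hb1, hb2⟩
  · exact no_sep hn v x y ⟨hb1, hb2⟩
  · exact no_sep' hn v y x ⟨hb1, hb2⟩
  · exact no_sep hn v y x ⟨hb1, hb2⟩

private lemma crosses_emb {n : ℕ} [NeZero n] (v : ZMod (n+1)) {x₁ y₁ x₂ y₂ : ZMod n}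
    (h : Crosses (n+1) s(emb n v x₁, emb n v y₁) s(emb n v x₂, emb n v y₂)) :
    Crosses n s(x₁,y₁) s(x₂,y₂) := by
  obtain ⟨a, b, c, d, h1, h2, hb1, hb2⟩ := h
  rcases Sym2.eq_iff.mp h1 with ⟨ha, hb⟩ | ⟨ha, hb⟩ <;>
    rcases Sym2.eq_iff.mp h2 with ⟨hc, hd⟩ | ⟨hc, hd⟩ <;>
    subst ha <;> subst hb <;> subst hc <;> subst hd
  · exact ⟨x₁, y₁, x₂, y₂, rfl, rfl, (btw_emb v _ _ _).mpr hb1, (btw_emb v _ _ _).mpr hb2⟩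
  · exact ⟨x₁, y₁, y₂, x₂, rfl, Sym2.eq_swap, (btw_emb v _ _ _).mpr hb1,
      (btw_emb v _ _ _).mpr hb2⟩
  · exact ⟨y₁, x₁, x₂, y₂, Sym2.eq_swap, rfl, (btw_emb v _ _ _).mpr hb1,
      (btw_emb v _ _ _).mpr hb2⟩
  · exact ⟨y₁, x₁, y₂, x₂, Sym2.eq_swap, Sym2.eq_swap, (btw_emb v _ _ _).mpr hb1,
      (btw_emb v _ _ _).mpr hb2⟩

private lemma succ_ne_aux {n : ℕ} (hn : 3 ≤ n) (v : ZMod (n+1)) {x y : ZMod n}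
    (hbig : emb n v y ≠ emb n v x + 1)
    (hne : s(emb n v x, emb n v y) ≠ s(v-1, v+1)) : y ≠ x + 1 := by
  haveI : NeZero n := ⟨by omega⟩
  intro h
  subst h
  have hx := ZMod.val_lt x
  by_cases hx1 : x.val = n - 1
  · -- then emb x = v - 1 and emb (x+1) = v + 1
    have e1 : emb n v x = v - 1 := by
      rw [v_sub_one (by omega) v]
      unfold emb
      rw [hx1]
    have hx0 : x + 1 = 0 := by
      have hxc : x = ((n-1 : ℕ) : ZMod n) := by rw [← hx1, cast_val]
      rw [hxc, show ((n-1:ℕ):ZMod n) + 1 = ((n:ℕ) : ZMod n) by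
        rw [Nat.cast_sub (by omega : 1 ≤ n)]; push_cast; ring, ZMod.natCast_self]
    have e2 : emb n v (x+1) = v + 1 := by
      rw [v_add_one]
      unfold emb
      rw [hx0, ZMod.val_zero]
    exact hne (by rw [e1, e2])
  · apply hbig
    have hv : (x+1).val = x.val + 1 := by
      rw [show x + 1 = ((x.val + 1 : ℕ) : ZMod n) by push_cast [cast_val]; ring,
        ZMod.val_natCast_of_lt (by omega)]
    unfold emb embN
    rw [hv]
    push_cast
    ring

private lemma isChord_pullback {n : ℕ} (hn : 3 ≤ n) (v : ZMod (n+1)) {x y : ZMod n}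
    (hc : IsChord (n+1) s(emb n v x, emb n v y))
    (hne : s(emb n v x, emb n v y) ≠ s(v-1, v+1)) : IsChord n s(x,y) := by
  haveI : NeZero n := ⟨by omega⟩
  have hexy : emb n v x ≠ emb n v y := fun h => hc.1 (Sym2.mk_isDiag_iff.mpr h)
  have hxy : x ≠ y := fun h => hexy (congrArg _ h)
  have h1 := hc.2 (emb n v x) (Sym2.mem_mk_left _ _) (emb n v y) (Sym2.mem_mk_right _ _) hexy
  have h2 := hc.2 (emb n v y) (Sym2.mem_mk_right _ _) (emb n v x) (Sym2.mem_mk_left _ _) hexy.symm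
  have hne' : s(emb n v y, emb n v x) ≠ s(v-1, v+1) := by
    rw [Sym2.eq_swap]; exact hne
  have c1 : y ≠ x + 1 := succ_ne_aux hn v h1.1 hne
  have c2 : x ≠ y + 1 := succ_ne_aux hn v h2.1 hne'
  constructor
  · intro hd; exact hxy (Sym2.mk_isDiag_iff.mp hd)
  · intro a ha b hb hab
    rw [Sym2.mem_iff] at ha hb
    rcases ha with rfl | rfl <;> rcases hb with rfl | rfl
    · exact absurd rfl hab
    · exact ⟨c1, fun h => c2 (by rw [h]; ring)⟩
    · exact ⟨c2, fun h => c1 (by rw [h]; ring)⟩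
    · exact absurd rfl hab

private lemma emb_eq_vsub {n : ℕ} [NeZero n] {v : ZMod (n+1)} {x : ZMod n}
    (h : emb n v x = v - 1) : x.val = n - 1 := by
  have hx := ZMod.val_lt x
  have : x.val = n - 1 := by
    have h2 : embN n v x.val = embN n v (n-1) := by
      rw [← v_sub_one (by omega : 1 ≤ n) v]; exact h
    exact embN_inj (by omega) (by omega) h2
  exact this

private lemma emb_eq_vadd {n : ℕ} [NeZero n] {v : ZMod (n+1)} {x : ZMod n}
    (h : emb n v x = v + 1) : x.val = 0 := by
  have hx := ZMod.val_lt x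
  have h2 : embN n v x.val = embN n v 0 := by rw [← v_add_one]; exact h
  exact embN_inj (by omega) (by omega) h2

private lemma choose_vertex (n : ℕ) (hn : 3 ≤ n) (X : Finset (Sym2 (ZMod (n+1))))
    (hcard : X.card ≤ n - 2) :
    ∃ v : ZMod (n+1), s(v-1, v+1) ∉ X ∧ (X.filter (fun c => ¬ v ∈ c)).card ≤ n - 3 := by
  classical
  by_cases hA : ∃ v : ZMod (n+1), (∃ c ∈ X, v ∈ c) ∧ s(v-1, v+1) ∉ X
  · obtain ⟨v, ⟨c₀, hc₀X, hvc₀⟩, hear⟩ := hA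
    refine ⟨v, hear, ?_⟩
    have hsub : X.filter (fun c => ¬ v ∈ c) ⊆ X.erase c₀ := by
      intro c hcmem
      rw [Finset.mem_filter] at hcmem
      rw [Finset.mem_erase]
      exact ⟨fun h => hcmem.2 (h ▸ hvc₀), hcmem.1⟩
    have h1 := Finset.card_le_card hsub
    have h2 := Finset.card_erase_of_mem hc₀X
    have h3 : 0 < X.card := Finset.card_pos.mpr ⟨c₀, hc₀X⟩
    omega
  · push_neg at hA
    rcases X.eq_empty_or_nonempty with hXe | ⟨c₀, hc₀⟩
    · refine ⟨0, by simp [hXe], ?_⟩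
      simp [hXe]
    · exfalso
      obtain ⟨x, y, rfl⟩ := sym2_cases c₀
      have chain : ∀ k : ℕ, ∃ c ∈ X, (x + (k : ZMod (n+1))) ∈ c := by
        intro k
        induction k with
        | zero => exact ⟨s(x,y), hc₀, by simp⟩
        | succ k ih =>
          obtain ⟨c, hc, hm⟩ := ih
          have he := hA _ ⟨c, hc, hm⟩
          refine ⟨_, he, ?_⟩
          rw [Sym2.mem_iff]
          right
          push_cast
          ring
      have all : ∀ w : ZMod (n+1), s(w-1, w+1) ∈ X := by
        intro w
        apply hA w
        obtain ⟨c, hc, hm⟩ := chain ((w - x).val)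
        refine ⟨c, hc, ?_⟩
        rwa [show x + (((w-x).val : ℕ) : ZMod (n+1)) = w by rw [cast_val]; ring] at hm
      by_cases h4 : n = 3
      · subst h4
        have e1 : s((0:ZMod 4)-1, (0:ZMod 4)+1) ∈ X := all 0
        have e2 : s((1:ZMod 4)-1, (1:ZMod 4)+1) ∈ X := all 1
        have hne : s((0:ZMod 4)-1, (0:ZMod 4)+1) ≠ s((1:ZMod 4)-1, (1:ZMod 4)+1) := by decide
        have : 1 < X.card := Finset.one_lt_card.mpr ⟨_, e1, _, e2, hne⟩
        omega
      · have hinj : Function.Injective (fun w : ZMod (n+1) => s(w-1, w+1)) := by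
          intro w w' h
          rcases Sym2.eq_iff.mp h with ⟨h1, h2⟩ | ⟨h1, h2⟩
          · linear_combination h1
          · exfalso
            have h40 : ((4:ℕ) : ZMod (n+1)) = 0 := by push_cast; linear_combination h2 - h1
            exact cast_ne_zero' (by norm_num) (by omega) h40
        have hsub : Finset.univ.image (fun w : ZMod (n+1) => s(w-1, w+1)) ⊆ X := by
          intro e he
          rw [Finset.mem_image] at he
          obtain ⟨w, _, rfl⟩ := he
          exact all w
        have hc1 := Finset.card_le_card hsub
        rw [Finset.card_image_of_injective _ hinj, Finset.card_univ, ZMod.card] at hc1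
        omega

private lemma main_lemma (n : ℕ) (hn : 3 ≤ n) :
    ∀ X : Finset (Sym2 (ZMod n)), (∀ e ∈ X, IsChord n e) → X.card ≤ n - 3 →
      ∃ T : Finset (Sym2 (ZMod n)), IsTriangulation n T ∧ Avoids n T X := by
  induction n, hn using Nat.le_induction with
  | base =>
    intro X _ _
    exact ⟨∅, ⟨by simp, by simp, by simp⟩, fun e _ => by simp⟩
  | succ n hn ih =>
    intro X hX hcard
    classical
    haveI : NeZero n := ⟨by omega⟩
    obtain ⟨v, hear, hX'⟩ := choose_vertex n hn X (by omega)
    set Y := (X.filter (fun c => ¬ v ∈ c)).image (Sym2.map (ivm n v)) with hYdef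
    have hYchord : ∀ e ∈ Y, IsChord n e := by
      intro e he
      rw [hYdef, Finset.mem_image] at he
      obtain ⟨c, hcX', rfl⟩ := he
      obtain ⟨w₁, w₂, rfl⟩ := sym2_cases c
      rw [Finset.mem_filter] at hcX'
      obtain ⟨hcX, hv⟩ := hcX'
      have hw₁ : w₁ ≠ v := fun h => hv (h ▸ Sym2.mem_mk_left _ _)
      have hw₂ : w₂ ≠ v := fun h => hv (h ▸ Sym2.mem_mk_right _ _)
      have e₁ : emb n v (ivm n v w₁) = w₁ := emb_ivm v hw₁
      have e₂ : emb n v (ivm n v w₂) = w₂ := emb_ivm v hw₂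
      rw [Sym2.map_pair_eq]
      apply isChord_pullback hn v
      · rw [e₁, e₂]; exact hX _ hcX
      · rw [e₁, e₂]; intro h; exact hear (h ▸ hcX)
    have hYcard : Y.card ≤ n - 3 := le_trans Finset.card_image_le hX'
    obtain ⟨T₀, ⟨hTcard, hTchord, hTcross⟩, hTav⟩ := ih Y hYchord hYcard
    have hnotmem : s(v-1, v+1) ∉ T₀.image (Sym2.map (emb n v)) := by
      rw [Finset.mem_image]
      rintro ⟨c, hc, hcq⟩
      obtain ⟨x, y, rfl⟩ := sym2_cases c
      rw [Sym2.map_pair_eq] at hcq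
      have hch := hTchord _ hc
      have hxy : x ≠ y := fun h => hch.1 (Sym2.mk_isDiag_iff.mpr h)
      rcases Sym2.eq_iff.mp hcq with ⟨h1, h2⟩ | ⟨h1, h2⟩
      · -- emb x = v-1, emb y = v+1, so y = x+1
        have hx1 : x.val = n - 1 := emb_eq_vsub h1
        have hy0 : y.val = 0 := emb_eq_vadd h2
        have hy : y = 0 := by
          have := cast_val y
          rw [hy0] at this
          simpa using this.symm
        have hyx : y = x + 1 := by
          have hxc : x = ((n-1 : ℕ) : ZMod n) := by rw [← hx1, cast_val]
          rw [hy, hxc, show ((n-1:ℕ):ZMod n) + 1 = ((n:ℕ) : ZMod n) by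
            rw [Nat.cast_sub (by omega : 1 ≤ n)]; push_cast; ring, ZMod.natCast_self]
        exact (hch.2 x (Sym2.mem_mk_left _ _) y (Sym2.mem_mk_right _ _) hxy).1 hyx
      · have hx0 : x.val = 0 := emb_eq_vadd h1
        have hy1 : y.val = n - 1 := emb_eq_vsub h2
        have hx : x = 0 := by
          have := cast_val x
          rw [hx0] at this
          simpa using this.symm
        have hxy' : x = y + 1 := by
          have hyc : y = ((n-1 : ℕ) : ZMod n) := by rw [← hy1, cast_val]
          rw [hx, hyc, show ((n-1:ℕ):ZMod n) + 1 = ((n:ℕ) : ZMod n) by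
            rw [Nat.cast_sub (by omega : 1 ≤ n)]; push_cast; ring, ZMod.natCast_self]
        exact (hch.2 y (Sym2.mem_mk_right _ _) x (Sym2.mem_mk_left _ _) hxy.symm).1 hxy'
    refine ⟨insert s(v-1, v+1) (T₀.image (Sym2.map (emb n v))), ⟨?_, ?_, ?_⟩, ?_⟩
    · rw [Finset.card_insert_of_notMem hnotmem,
        Finset.card_image_of_injective _ (Sym2.map.injective (emb_inj v)), hTcard]
      omega
    · intro e he
      rcases Finset.mem_insert.mp he with rfl | he
      · exact ear_isChord hn v
      · rw [Finset.mem_image] at he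
        obtain ⟨c, hc, rfl⟩ := he
        obtain ⟨x, y, rfl⟩ := sym2_cases c
        rw [Sym2.map_pair_eq]
        exact isChord_emb hn v (hTchord _ hc)
    · intro e he f hf hef
      rcases Finset.mem_insert.mp he with rfl | he <;> rcases Finset.mem_insert.mp hf with hf' | hf'
      · exact absurd hf'.symm hef
      · rw [Finset.mem_image] at hf'
        obtain ⟨c, hc, rfl⟩ := hf'
        obtain ⟨x, y, rfl⟩ := sym2_cases c
        rw [Sym2.map_pair_eq]
        exact no_cross_ear₁ hn v x y
      · subst hf'
        rw [Finset.mem_image] at he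
        obtain ⟨c, hc, rfl⟩ := he
        obtain ⟨x, y, rfl⟩ := sym2_cases c
        rw [Sym2.map_pair_eq]
        exact no_cross_ear₂ hn v x y
      · rw [Finset.mem_image] at he hf'
        obtain ⟨c, hc, rfl⟩ := he
        obtain ⟨c', hc', rfl⟩ := hf'
        obtain ⟨x, y, rfl⟩ := sym2_cases c
        obtain ⟨x', y', rfl⟩ := sym2_cases c'
        rw [Sym2.map_pair_eq, Sym2.map_pair_eq]
        intro hcr
        exact hTcross _ hc _ hc' (fun h => hef (by rw [h])) (crosses_emb v hcr)
    · intro e heX heT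
      rcases Finset.mem_insert.mp heT with rfl | h
      · exact hear heX
      · rw [Finset.mem_image] at h
        obtain ⟨c, hc, rfl⟩ := h
        obtain ⟨x, y, rfl⟩ := sym2_cases c
        rw [Sym2.map_pair_eq] at heX
        have hvmem : ¬ v ∈ s(emb n v x, emb n v y) := by
          rw [Sym2.mem_iff]
          push_neg
          exact ⟨fun h => emb_ne_v v x h.symm, fun h => emb_ne_v v y h.symm⟩
        have hmem : s(emb n v x, emb n v y) ∈ X.filter (fun c => ¬ v ∈ c) :=
          Finset.mem_filter.mpr ⟨heX, hvmem⟩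
        have hY : Sym2.map (ivm n v) s(emb n v x, emb n v y) ∈ Y :=
          Finset.mem_image_of_mem _ hmem
        rw [Sym2.map_pair_eq, ivm_emb, ivm_emb] at hY
        exact hTav _ hY hc


/-- For every `n ≥ 3` and every set `X` of chords of the
convex `n`-gon with `|X| ≤ n - 3`, some triangulation contains no chord
of `X`. -/
theorem exists_triangulation_avoiding (n : ℕ) (hn : 3 ≤ n)
    (X : Finset (Sym2 (ZMod n))) (hX : ∀ e ∈ X, IsChord n e)
    (hcard : X.card ≤ n - 3) :
    ∃ T : Finset (Sym2 (ZMod n)), IsTriangulation n T ∧ Avoids n T X :=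
  main_lemma n hn X hX hcard

end FlipCut
end
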